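/- arXiv:2308.07636 — 3 statements merged into one kernel-verified Lean document; each statement's English description precedes it below -/
import Mathlib

section
/- (Uniqueness of the weighted L_q minimizer) Assume Ψ satisfies the discrete Haar condition and q > 1. Let w ∈ ℝ^m with w_j ≥ 0 for all j have at least n + 1 strictly positive entries, and suppose inf_{a ∈ ℂ^n} ∑_{j=1}^m w_j |f_j − (Ψ a)_j|^q > 0. Then this infimum is attained at exactly one point a ∈ ℂ^n. -/
/-! The objective is a nonnegatively weighted sum of the strictly convex functions `z ↦ ‖z‖ ^ q`
composed with the affine maps `a ↦ f j - (Ψ a) j`. By the Haar condition, any `n` rows of positive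
weight determine `a`, so two distinct points differ in some positively weighted row. Hence the
objective is strictly convex, so it has at most one minimizer, and it is coercive, so it attains
its infimum. -/

open Filter Set Bornology

open scoped Matrix

section

variable {E : Type*} [NormedAddCommGroup E] [NormedSpace ℝ E]

theorem strictConvexOn_norm_rpow [StrictConvexSpace ℝ E] {q : ℝ} (hq : 1 < q) :
    StrictConvexOn ℝ univ fun x : E => ‖x‖ ^ q := by
  refine ⟨convex_univ, fun x _ y _ hxy a b ha hb hab => ?_⟩
  rcases eq_or_ne ‖x‖ ‖y‖ with hnorm | hnorm
  · have hlt : ‖a • x + b • y‖ < ‖x‖ := norm_combo_lt_of_ne le_rfl hnorm.ge hxy ha hb hab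
    calc ‖a • x + b • y‖ ^ q < ‖x‖ ^ q := Real.rpow_lt_rpow (norm_nonneg _) hlt (by linarith)
      _ = a • ‖x‖ ^ q + b • ‖y‖ ^ q := by
        rw [← hnorm, smul_eq_mul, smul_eq_mul, ← add_mul, hab, one_mul]
  · have htri : ‖a • x + b • y‖ ≤ a • ‖x‖ + b • ‖y‖ := by
      simpa [norm_smul, abs_of_pos ha, abs_of_pos hb] using norm_add_le (a • x) (b • y)
    calc ‖a • x + b • y‖ ^ q ≤ (a • ‖x‖ + b • ‖y‖) ^ q :=
          Real.rpow_le_rpow (norm_nonneg _) htri (by linarith)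
      _ < a • ‖x‖ ^ q + b • ‖y‖ ^ q :=
          (strictConvexOn_rpow hq).2 (norm_nonneg x) (norm_nonneg y) hnorm ha hb hab

variable {ι V : Type*} [Fintype ι] {w : ι → ℝ}

theorem strictConvexOn_sum_mul_comp_sub [AddCommGroup V] [Module ℝ V] {φ : E → ℝ}
    (hφ : StrictConvexOn ℝ univ φ) (hw : ∀ j, 0 ≤ w j) (f : ι → E) (L : V →ₗ[ℝ] ι → E)
    (hL : Function.Injective fun v (j : {j | 0 < w j}) => L v j) :
    StrictConvexOn ℝ univ fun v => ∑ j, w j * φ (f j - L v j) := by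
  refine ⟨convex_univ, fun v _ v' _ hvv' a b ha hb hab => ?_⟩
  obtain ⟨⟨j₀, hj₀⟩, hne⟩ : ∃ j : {j | 0 < w j}, L v j ≠ L v' j := by
    by_contra! h
    exact hvv' (hL (funext h))
  have hcomb (j : ι) :
      f j - L (a • v + b • v') j = a • (f j - L v j) + b • (f j - L v' j) := by
    simp only [map_add, map_smul, Pi.add_apply, Pi.smul_apply]
    linear_combination (norm := module) (-hab) • f j
  calc ∑ j, w j * φ (f j - L (a • v + b • v') j)
      < ∑ j, w j * (a • φ (f j - L v j) + b • φ (f j - L v' j)) := by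
        simp only [hcomb]
        refine Finset.sum_lt_sum (fun j _ => ?_) ⟨j₀, Finset.mem_univ _, ?_⟩
        · exact mul_le_mul_of_nonneg_left (hφ.convexOn.2 trivial trivial ha.le hb.le hab) (hw j)
        · exact mul_lt_mul_of_pos_left
            (hφ.2 trivial trivial (sub_right_injective.ne hne) ha hb hab) hj₀
    _ = a • ∑ j, w j * φ (f j - L v j) + b • ∑ j, w j * φ (f j - L v' j) := by
        simp only [smul_eq_mul, Finset.mul_sum, ← Finset.sum_add_distrib]
        exact Finset.sum_congr rfl fun j _ => by ring

theorem tendsto_sum_mul_comp_sub_cobounded [NormedAddCommGroup V] [NormedSpace ℝ V]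
    [FiniteDimensional ℝ V] {φ : E → ℝ} (hφ0 : ∀ x, 0 ≤ φ x)
    (hφ : Tendsto φ (cobounded E) atTop) (hw : ∀ j, 0 ≤ w j) (f : ι → E) (L : V →ₗ[ℝ] ι → E)
    (hL : Function.Injective fun v (j : {j | 0 < w j}) => L v j) :
    Tendsto (fun v => ∑ j, w j * φ (f j - L v j)) (cobounded V) atTop := by
  let LS : V →ₗ[ℝ] {j | 0 < w j} → E := LinearMap.funLeft ℝ E Subtype.val ∘ₗ L
  obtain ⟨K, -, hK⟩ := LS.exists_antilipschitzWith (LinearMap.ker_eq_bot.2 hL)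
  have hT : Tendsto (fun v => (fun j : {j | 0 < w j} => f j) - LS v) (cobounded V)
      (cobounded _) := (tendsto_const_sub_cobounded _).comp hK.tendsto_cobounded
  rw [cobounded_pi] at hT
  refine Tendsto.mono_left ?_ hT.le_comap
  simp only [Filter.coprodᵢ, comap_iSup, comap_comap]
  refine tendsto_iSup.2 fun ⟨j, hj⟩ => tendsto_atTop_mono (fun v => ?_)
    ((hφ.comp tendsto_comap).const_mul_atTop hj)
  exact Finset.single_le_sum (f := fun j => w j * φ (f j - L v j))
    (fun i _ => mul_nonneg (hw i) (hφ0 _)) (Finset.mem_univ j)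

end

theorem existsUnique_eq_iInf_of_strictConvexOn {V : Type*} [NormedAddCommGroup V]
    [NormedSpace ℝ V] [ProperSpace V] {F : V → ℝ} (hc : Continuous F)
    (hsc : StrictConvexOn ℝ univ F) (hF : Tendsto F (cobounded V) atTop) :
    ∃! a, F a = ⨅ b, F b := by
  obtain ⟨a, ha⟩ := hc.exists_forall_le (Metric.cobounded_eq_cocompact (α := V) ▸ hF)
  have hinf : ⨅ b, F b = F a :=
    le_antisymm (ciInf_le ⟨F a, forall_mem_range.2 ha⟩ a) (le_ciInf ha)
  refine ⟨a, hinf.symm, fun b hb => hsc.eq_of_isMinOn ?_ (isMinOn_univ_iff.2 ha) trivial trivial⟩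
  exact isMinOn_univ_iff.2 fun c => hb ▸ hinf ▸ ha c

theorem Matrix.injective_restrict_mulVec_of_isUnit_submatrix {K ι κ : Type*} [Field K]
    [Fintype κ] [DecidableEq κ] {Ψ : Matrix ι κ K} {s : Set ι} {ρ : κ → ι} (hρ : ∀ i, ρ i ∈ s)
    (h : IsUnit (Ψ.submatrix ρ id)) : Function.Injective fun a (j : s) => (Ψ *ᵥ a) j :=
  fun _ _ hab => Matrix.mulVec_injective_iff_isUnit.2 h <| funext fun i => congrFun hab ⟨ρ i, hρ i⟩

theorem Matrix.injective_restrict_mulVec_of_haar {K ι κ : Type*} [Field K] [Fintype κ]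
    [DecidableEq κ] {Ψ : Matrix ι κ K}
    (hΨ : ∀ ρ : κ → ι, Function.Injective ρ → IsUnit (Ψ.submatrix ρ id)) {s : Set ι}
    [Finite s] (hs : Fintype.card κ ≤ s.ncard) : Function.Injective fun a (j : s) => (Ψ *ᵥ a) j := by
  have := Fintype.ofFinite s
  obtain ⟨ρ⟩ : Nonempty (κ ↪ s) :=
    Function.Embedding.nonempty_of_card_le (by rwa [← Nat.card_eq_fintype_card (α := s)])
  exact injective_restrict_mulVec_of_isUnit_submatrix (fun i => (ρ i).2)
    (hΨ _ (Subtype.val_injective.comp ρ.injective))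

theorem weighted_minimizer_unique_general
    (m n : ℕ)
    (f : Fin m → ℂ) (Ψ : Matrix (Fin m) (Fin n) ℂ)
    (hHaar : ∀ ρ : Fin n → Fin m, Function.Injective ρ →
      IsUnit (Matrix.of fun i j => Ψ (ρ i) j : Matrix (Fin n) (Fin n) ℂ))
    (q : ℝ) (hq : 1 < q)
    (w : Fin m → ℝ) (hw0 : ∀ j, 0 ≤ w j)
    (hsupp : n + 1 ≤ {j : Fin m | 0 < w j}.ncard) :
    ∃! a : Fin n → ℂ,
      (∑ j, w j * ‖f j - Ψ.mulVec a j‖ ^ q)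
        = ⨅ a' : Fin n → ℂ, ∑ j, w j * ‖f j - Ψ.mulVec a' j‖ ^ q := by
  have hinj := Matrix.injective_restrict_mulVec_of_haar hHaar (s := {j | 0 < w j})
    (by rw [Fintype.card_fin]; omega)
  let L : (Fin n → ℂ) →ₗ[ℝ] Fin m → ℂ := Ψ.mulVecLin.restrictScalars ℝ
  have hconv : StrictConvexOn ℝ univ fun a => ∑ j, w j * ‖f j - (Ψ *ᵥ a) j‖ ^ q :=
    strictConvexOn_sum_mul_comp_sub (strictConvexOn_norm_rpow hq) hw0 f L hinj
  have hcoer : Tendsto (fun a => ∑ j, w j * ‖f j - (Ψ *ᵥ a) j‖ ^ q) (cobounded _) atTop :=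
    tendsto_sum_mul_comp_sub_cobounded (φ := fun z : ℂ => ‖z‖ ^ q)
      (fun _ => Real.rpow_nonneg (norm_nonneg _) _)
      ((tendsto_rpow_atTop (by linarith)).comp tendsto_norm_cobounded_atTop) hw0 f L hinj
  have hq0 : 0 ≤ q := by linarith
  have hcont : Continuous fun a => ∑ j, w j * ‖f j - (Ψ *ᵥ a) j‖ ^ q := by
    fun_prop (disch := exact fun _ => Or.inr hq0)
  exact existsUnique_eq_iInf_of_strictConvexOn hcont hconv hcoer

/-- Uniqueness of the weighted `L_q` minimizer: if `Ψ` satisfies the discrete Haar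
condition, `q > 1`, `w ≥ 0` has at least `n + 1` strictly positive entries, and the
infimum of the weighted objective is positive, then the infimum is attained at exactly
one point `a ∈ ℂ^n`. -/
theorem weighted_minimizer_unique
    (m n : ℕ) (hn : 0 < n) (hnm : n + 1 ≤ m)
    (f : Fin m → ℂ) (Ψ : Matrix (Fin m) (Fin n) ℂ)
    (hHaar : ∀ ρ : Fin n → Fin m, Function.Injective ρ →
      IsUnit (Matrix.of fun i j => Ψ (ρ i) j : Matrix (Fin n) (Fin n) ℂ))
    (q : ℝ) (hq : 1 < q)
    (w : Fin m → ℝ) (hw0 : ∀ j, 0 ≤ w j)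
    (hsupp : n + 1 ≤ {j : Fin m | 0 < w j}.ncard)
    (hpos : 0 < ⨅ a : Fin n → ℂ, ∑ j, w j * ‖f j - Ψ.mulVec a j‖ ^ q) :
    ∃! a : Fin n → ℂ,
      (∑ j, w j * ‖f j - Ψ.mulVec a j‖ ^ q)
        = ⨅ a' : Fin n → ℂ, ∑ j, w j * ‖f j - Ψ.mulVec a' j‖ ^ q :=
  weighted_minimizer_unique_general m n f Ψ hHaar q hq w hw0 hsupp
end

section
/- (Lemma 3.1) Let ψ_1,…,ψ_n : [a,b] → ℝ be continuous functions satisfying the Haar condition, and let z_0 < z_1 < … < z_n be n + 1 points in [a,b]. Let M ∈ ℝ^{(n+1)×n} be the matrix with entries M_{i,j} = ψ_j(z_{i−1}). Then the solution set {t ∈ ℝ^{n+1} : Mᵀ t = 0} is a one-dimensional subspace of ℝ^{n+1}, and every nonzero t = (t_1,…,t_{n+1}) in it satisfies t_j · t_{j+1} < 0 for all j = 1,…,n. -/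
/-!
Deleting the node `z i` from `M` leaves an `n × n` collocation matrix with determinant `D i`,
nonzero by the Haar condition. Hence `Mᵀ` has rank `n`, and its kernel is the line spanned by
the vector `((-1)^i D i)`, which lies in the kernel by Laplace expansion of a determinant with a
repeated column. The minors `D j` and `D (j+1)` are determinants at two strictly increasing
`n`-tuples of nodes; these tuples form a convex set on which the determinant is continuous and
never vanishes, so `D j * D (j+1) > 0` and consecutive entries of the kernel vector have
opposite signs.
-/

open Matrix Set Function

theorem convex_setOf_strictMono {𝕜 ι : Type*} [Field 𝕜] [LinearOrder 𝕜]
    [IsStrictOrderedRing 𝕜] [Preorder ι] : Convex 𝕜 {v : ι → 𝕜 | StrictMono v} := by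
  intro v hv u hu p q hp hq hpq i j hij
  simp only [Pi.add_apply, Pi.smul_apply, smul_eq_mul]
  rcases hp.eq_or_lt with rfl | hp
  · rw [zero_add] at hpq
    simpa [hpq] using hu hij
  · exact add_lt_add_of_lt_of_le (mul_lt_mul_of_pos_left (hv hij) hp)
      (mul_le_mul_of_nonneg_left (hu hij).le hq)

theorem IsPreconnected.mul_pos_of_ne_zero {α : Type*} [TopologicalSpace α] {S : Set α}
    {f : α → ℝ} (hS : IsPreconnected S) (hf : ContinuousOn f S) (hf0 : ∀ x ∈ S, f x ≠ 0)
    {x y : α} (hx : x ∈ S) (hy : y ∈ S) : 0 < f x * f y := by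
  by_contra! h
  have h0 : (0 : ℝ) ∈ uIcc (f x) (f y) := by
    rcases mul_nonpos_iff.1 h with ⟨hx0, hy0⟩ | ⟨hx0, hy0⟩
    · exact mem_uIcc.2 (Or.inr ⟨hy0, hx0⟩)
    · exact mem_uIcc.2 (Or.inl ⟨hx0, hy0⟩)
  obtain ⟨w, hw, hw0⟩ := (hS.image f hf).ordConnected.uIcc_subset
    (mem_image_of_mem f hx) (mem_image_of_mem f hy) h0
  exact hf0 w hw hw0

namespace Matrix

section CommRing

variable {R : Type*} [CommRing R] {n : ℕ}

def signedMinors (M : Matrix (Fin (n + 1)) (Fin n) R) : Fin (n + 1) → R :=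
  fun i => (-1) ^ (i : ℕ) * (M.submatrix i.succAbove id).det

theorem transpose_mulVec_signedMinors (M : Matrix (Fin (n + 1)) (Fin n) R) :
    Mᵀ *ᵥ M.signedMinors = 0 := by
  ext j
  -- Laplace expansion along the first column of `M` with its `j`-th column prepended
  let B : Matrix (Fin (n + 1)) (Fin (n + 1)) R := Matrix.of fun i => Fin.cons (M i j) (M i)
  have hB : B.det = 0 := det_zero_of_column_eq (Fin.succ_ne_zero j).symm fun _ => rfl
  rw [det_succ_column_zero] at hB
  rw [Pi.zero_apply, ← hB, mulVec, dotProduct]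
  refine Finset.sum_congr rfl fun i _ => ?_
  have hsub : B.submatrix i.succAbove Fin.succ = M.submatrix i.succAbove id := rfl
  rw [hsub, signedMinors, transpose_apply]
  simp only [B, of_apply, Fin.cons_zero]
  ring

theorem signedMinors_castSucc_mul_succ (M : Matrix (Fin (n + 1)) (Fin n) R)
    (j : Fin n) :
    M.signedMinors j.castSucc * M.signedMinors j.succ =
      -((M.submatrix j.castSucc.succAbove id).det * (M.submatrix j.succ.succAbove id).det) := by
  have hsq : ((-1 : R) ^ (j : ℕ)) ^ 2 = 1 := by
    rw [← pow_mul, mul_comm, pow_mul, neg_one_sq, one_pow]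
  simp only [signedMinors, Fin.val_castSucc, Fin.val_succ, pow_succ]
  linear_combination -(M.submatrix j.castSucc.succAbove id).det *
    (M.submatrix j.succ.succAbove id).det * hsq

end CommRing

section Field

variable {K : Type*} [Field K] {n : ℕ} (M : Matrix (Fin (n + 1)) (Fin n) K) {i₀ : Fin (n + 1)}

theorem signedMinors_ne_zero (h : (M.submatrix i₀.succAbove id).det ≠ 0) :
    M.signedMinors ≠ 0 := fun h0 => by
  simpa [signedMinors, h] using congr_fun h0 i₀

theorem finrank_ker_transpose_mulVecLin (h : (M.submatrix i₀.succAbove id).det ≠ 0) :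
    Module.finrank K (LinearMap.ker Mᵀ.mulVecLin) = 1 := by
  have hrank : M.rank = n := by
    refine le_antisymm M.rank_le_width ?_
    have := rank_of_isUnit _ ((isUnit_iff_isUnit_det _).2 h.isUnit)
    rw [Fintype.card_fin] at this
    exact this.ge.trans (M.rank_submatrix_le i₀.succAbove id)
  have := LinearMap.finrank_range_add_finrank_ker Mᵀ.mulVecLin
  rw [← rank, rank_transpose, hrank, Module.finrank_fin_fun] at this
  omega

theorem ker_transpose_mulVecLin_eq_span_signedMinors
    (h : (M.submatrix i₀.succAbove id).det ≠ 0) :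
    LinearMap.ker Mᵀ.mulVecLin = K ∙ M.signedMinors := by
  refine (Submodule.eq_of_le_of_finrank_eq ?_ ?_).symm
  · exact (Submodule.span_singleton_le_iff_mem _ _).2 M.transpose_mulVec_signedMinors
  · rw [finrank_span_singleton (M.signedMinors_ne_zero h), M.finrank_ker_transpose_mulVecLin h]

end Field

end Matrix

def HaarCondition {n : ℕ} (ψ : Fin n → ℝ → ℝ) (s : Set ℝ) : Prop :=
  ∀ z : Fin n → ℝ, (∀ i, z i ∈ s) → Injective z →
    IsUnit (Matrix.of (fun i j => ψ j (z i)) : Matrix (Fin n) (Fin n) ℝ)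

namespace HaarCondition

variable {n : ℕ} {ψ : Fin n → ℝ → ℝ} {s : Set ℝ}

theorem det_ne_zero (h : HaarCondition ψ s) {w : Fin n → ℝ} (hws : ∀ i, w i ∈ s)
    (hw : Injective w) : (Matrix.of fun i j => ψ j (w i)).det ≠ 0 :=
  ((isUnit_iff_isUnit_det _).1 (h w hws hw)).ne_zero

theorem det_mul_pos (h : HaarCondition ψ s) (hs : Convex ℝ s)
    (hψ : ∀ j, ContinuousOn (ψ j) s) {w w' : Fin n → ℝ} (hw : StrictMono w)
    (hws : ∀ i, w i ∈ s) (hw' : StrictMono w') (hws' : ∀ i, w' i ∈ s) :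
    0 < (Matrix.of fun i j => ψ j (w i)).det * (Matrix.of fun i j => ψ j (w' i)).det := by
  let S := {v : Fin n → ℝ | StrictMono v} ∩ univ.pi fun _ => s
  have hS : IsPreconnected S :=
    (convex_setOf_strictMono.inter (convex_pi fun _ _ => hs)).isPreconnected
  have hcont : ContinuousOn (fun v : Fin n → ℝ => (Matrix.of fun i j => ψ j (v i)).det) S :=
    (continuous_id.matrix_det).comp_continuousOn <| continuousOn_pi.2 fun i =>
      continuousOn_pi.2 fun j => (hψ j).comp (continuous_apply i).continuousOn
        fun v hv => hv.2 i (mem_univ i)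
  exact hS.mul_pos_of_ne_zero hcont (fun v hv => h.det_ne_zero (fun i => hv.2 i (mem_univ i))
    hv.1.injective) ⟨hw, fun i _ => hws i⟩ ⟨hw', fun i _ => hws' i⟩

end HaarCondition

theorem haar_kernel_alternating_general
    (n : ℕ) (a b : ℝ)
    (ψ : Fin n → ℝ → ℝ)
    (hcont : ∀ i, ContinuousOn (ψ i) (Set.Icc a b))
    (hHaar : ∀ z : Fin n → ℝ, (∀ i, z i ∈ Set.Icc a b) → Function.Injective z →
      IsUnit (Matrix.of (fun i j => ψ j (z i)) : Matrix (Fin n) (Fin n) ℝ))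
    (z : Fin (n + 1) → ℝ) (hz : StrictMono z) (hzab : ∀ i, z i ∈ Set.Icc a b) :
    Module.finrank ℝ
      (LinearMap.ker
        (Matrix.mulVecLin
          (Matrix.of (fun i j => ψ j (z i)) : Matrix (Fin (n + 1)) (Fin n) ℝ).transpose))
      = 1
    ∧ ∀ t : Fin (n + 1) → ℝ,
        (Matrix.of (fun i j => ψ j (z i)) :
          Matrix (Fin (n + 1)) (Fin n) ℝ).transpose.mulVec t = 0 →
        t ≠ 0 → ∀ j : Fin n, t j.castSucc * t j.succ < 0 := by
  set M : Matrix (Fin (n + 1)) (Fin n) ℝ := Matrix.of fun i j => ψ j (z i)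
  have hHaar : HaarCondition ψ (Icc a b) := hHaar
  have hz' (i : Fin (n + 1)) : StrictMono (z ∘ i.succAbove) :=
    hz.comp (Fin.strictMono_succAbove i)
  have hminor : (M.submatrix (0 : Fin (n + 1)).succAbove id).det ≠ 0 :=
    hHaar.det_ne_zero (fun _ => hzab _) (hz' 0).injective
  refine ⟨M.finrank_ker_transpose_mulVecLin hminor, fun t ht ht0 j => ?_⟩
  obtain ⟨c, rfl⟩ := Submodule.mem_span_singleton.1 <|
    M.ker_transpose_mulVecLin_eq_span_signedMinors hminor ▸ LinearMap.mem_ker.2 ht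
  have hc : c ≠ 0 := by rintro rfl; exact ht0 (zero_smul _ _)
  have hD := hHaar.det_mul_pos (convex_Icc a b) hcont (hz' j.castSucc) (fun _ => hzab _)
    (hz' j.succ) (fun _ => hzab _)
  calc (c • M.signedMinors) j.castSucc * (c • M.signedMinors) j.succ
      = c * c * (M.signedMinors j.castSucc * M.signedMinors j.succ) := by
        simp only [Pi.smul_apply, smul_eq_mul]; ring
    _ = -(c * c * ((M.submatrix j.castSucc.succAbove id).det *
          (M.submatrix j.succ.succAbove id).det)) := by
        rw [M.signedMinors_castSucc_mul_succ]; ring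
    _ < 0 := neg_neg_of_pos (mul_pos (mul_self_pos.2 hc) hD)

/-- Lemma 3.1: for continuous functions `ψ_1,…,ψ_n` on `[a,b]` satisfying the Haar
condition and points `z_0 < z_1 < … < z_n` in `[a,b]`, the kernel of the transpose of
the `(n+1)×n` matrix `M_{i,j} = ψ_j(z_{i-1})` is a one-dimensional subspace of
`ℝ^{n+1}`, and every nonzero vector `t` in it has strictly alternating consecutive
signs: `t_j t_{j+1} < 0`. -/
theorem haar_kernel_alternating
    (n : ℕ) (hn : 0 < n) (a b : ℝ) (hab : a < b)
    (ψ : Fin n → ℝ → ℝ)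
    (hcont : ∀ i, ContinuousOn (ψ i) (Set.Icc a b))
    (hHaar : ∀ z : Fin n → ℝ, (∀ i, z i ∈ Set.Icc a b) → Function.Injective z →
      IsUnit (Matrix.of (fun i j => ψ j (z i)) : Matrix (Fin n) (Fin n) ℝ))
    (z : Fin (n + 1) → ℝ) (hz : StrictMono z) (hzab : ∀ i, z i ∈ Set.Icc a b) :
    Module.finrank ℝ
      (LinearMap.ker
        (Matrix.mulVecLin
          (Matrix.of (fun i j => ψ j (z i)) : Matrix (Fin (n + 1)) (Fin n) ℝ).transpose))
      = 1
    ∧ ∀ t : Fin (n + 1) → ℝ,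
        (Matrix.of (fun i j => ψ j (z i)) :
          Matrix (Fin (n + 1)) (Fin n) ℝ).transpose.mulVec t = 0 →
        t ≠ 0 → ∀ j : Fin n, t j.castSucc * t j.succ < 0 :=
  haar_kernel_alternating_general n a b ψ hcont hHaar z hz hzab
end

section
/- (Hessian of the L_2 dual function, Proposition 4.1) Let w ∈ ℝ^m satisfy w_j > 0 for all j and set W = diag(w). Then for all indices i, j, the partial derivative of the map w ↦ |r_i(w)|² with respect to w_j exists at w and equals −2 Re( conj(r_i(w)) · (Ψ (Ψᴴ W Ψ)^{−1} Ψᴴ)_{i,j} · r_j(w) ); equivalently, the Hessian of d at w is ∇²d(w) = −2 Re( diag(r(w))ᴴ Ψ (Ψᴴ W Ψ)^{−1} Ψᴴ diag(r(w)) ). -/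
/-!
The residual satisfies the normal equations `Ψᴴ W r(w) = 0`, which turn the change of weights
into an exact update: whenever `Ψᴴ V Ψ` is invertible,
`r(v) = r(w) - Ψ (Ψᴴ V Ψ)⁻¹ Ψᴴ (V - W) r(w)`.
For `v = w + t eⱼ` this says `rᵢ(v) = rᵢ(w) - t (Ψ (Ψᴴ V Ψ)⁻¹ Ψᴴ)ᵢⱼ rⱼ(w)`, so the difference
quotient of `rᵢ` in the direction `eⱼ` is a continuous function of `t` (matrix inversion is
continuous at the invertible `Ψᴴ W Ψ`), and its value at `t = 0` is the derivative. The chain rule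
for `|·|²` then gives the Hessian entry.
-/

open scoped BigOperators

/-- The residual `r(w) = f − Ψ a(w)` of the weighted least-squares problem, where
`a(w) = (Ψᴴ W Ψ)⁻¹ Ψᴴ W f` and `W = diag(w)`. -/
noncomputable def lsResidual (m n : ℕ) (f : Fin m → ℂ) (Ψ : Matrix (Fin m) (Fin n) ℂ)
    (w : Fin m → ℝ) : Fin m → ℂ :=
  f - Ψ.mulVec
    ((Ψ.conjTranspose * Matrix.diagonal (fun j => (w j : ℂ)) * Ψ)⁻¹.mulVec
      ((Ψ.conjTranspose * Matrix.diagonal (fun j => (w j : ℂ))).mulVec f))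

open Matrix Filter Topology
open scoped ComplexOrder

theorem Matrix.mulVec_injective_of_rank_eq_card {m n K : Type*} [Fintype m] [Fintype n] [Field K]
    {A : Matrix m n K} (h : A.rank = Fintype.card n) : Function.Injective A.mulVec := by
  rw [mulVec_injective_iff, linearIndependent_iff_card_eq_finrank_span, Set.finrank,
    ← rank_eq_finrank_span_cols, h]

theorem hasDerivAt_sub_smul_of_continuousAt {𝕜 F : Type*} [NontriviallyNormedField 𝕜]
    [NormedAddCommGroup F] [NormedSpace 𝕜 F] {g : 𝕜 → F} {x : 𝕜} (hg : ContinuousAt g x) :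
    HasDerivAt (fun s => (s - x) • g s) (g x) x := by
  rw [hasDerivAt_iff_tendsto_slope]
  refine (tendsto_nhdsWithin_of_tendsto_nhds hg.tendsto).congr' ?_
  filter_upwards [self_mem_nhdsWithin] with s (hs : s ≠ x)
  simp [slope, smul_smul, inv_mul_cancel₀ (sub_ne_zero.mpr hs)]

theorem diagonal_update_sub_diagonal_mulVec {m : Type*} [Fintype m] [DecidableEq m]
    (w : m → ℝ) (j : m) (s : ℝ) (x : m → ℂ) :
    (diagonal (fun k => (Function.update w j s k : ℂ)) - diagonal (fun k => (w k : ℂ))) *ᵥ x =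
      Pi.single j ((s - w j) • x j) := by
  ext k
  rcases eq_or_ne k j with rfl | hk
  · simp [mulVec_diagonal, sub_mul, Complex.real_smul]
  · simp [mulVec_diagonal, hk]

section WeightedGram

variable {m n 𝕜 : Type*} [Fintype m] [Fintype n] [DecidableEq m] [DecidableEq n] [RCLike 𝕜]

def weightedGram (Ψ : Matrix m n 𝕜) (w : m → ℝ) : Matrix n n 𝕜 :=
  Ψᴴ * diagonal (fun j => (w j : 𝕜)) * Ψ

theorem isUnit_weightedGram {Ψ : Matrix m n 𝕜} (hΨ : Function.Injective Ψ.mulVec) {w : m → ℝ}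
    (hw : ∀ j, 0 < w j) : IsUnit (weightedGram Ψ w) :=
  ((posDef_diagonal_iff.mpr fun j => RCLike.ofReal_pos.mpr (hw j)).conjTranspose_mul_mul_same
    hΨ).isUnit

theorem continuousAt_weightedGram_inv {Ψ : Matrix m n 𝕜} {w : m → ℝ}
    (hG : IsUnit (weightedGram Ψ w)) : ContinuousAt (fun v => (weightedGram Ψ v)⁻¹) w := by
  obtain ⟨u, hu⟩ := (isUnit_iff_isUnit_det _).mp hG
  have hinv : ContinuousAt Inv.inv (weightedGram Ψ w) :=
    continuousAt_matrix_inv _ (hu ▸ NormedRing.inverse_continuousAt u)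
  refine hinv.comp (Continuous.continuousAt ?_)
  unfold weightedGram
  fun_prop

end WeightedGram

section Residual

variable {m n : ℕ} (f : Fin m → ℂ) {Ψ : Matrix (Fin m) (Fin n) ℂ}

theorem lsResidual_eq (w : Fin m → ℝ) :
    lsResidual m n f Ψ w =
      f - Ψ *ᵥ ((weightedGram Ψ w)⁻¹ *ᵥ ((Ψᴴ * diagonal (fun k => (w k : ℂ))) *ᵥ f)) :=
  rfl

theorem conjTranspose_mul_diagonal_mulVec_lsResidual {w : Fin m → ℝ}
    (hw : IsUnit (weightedGram Ψ w)) :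
    (Ψᴴ * diagonal (fun k => (w k : ℂ))) *ᵥ lsResidual m n f Ψ w = 0 := by
  have hGG : Ψᴴ * diagonal (fun k => (w k : ℂ)) * Ψ * (weightedGram Ψ w)⁻¹ = 1 :=
    mul_nonsing_inv _ ((isUnit_iff_isUnit_det _).mp hw)
  rw [lsResidual_eq, mulVec_sub, mulVec_mulVec, mulVec_mulVec, hGG, one_mulVec, sub_self]

theorem lsResidual_eq_sub {v w : Fin m → ℝ} (hv : IsUnit (weightedGram Ψ v))
    (hw : IsUnit (weightedGram Ψ w)) :
    lsResidual m n f Ψ v = lsResidual m n f Ψ w - (Ψ * (weightedGram Ψ v)⁻¹ * Ψᴴ) *ᵥ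
      ((diagonal (fun k => (v k : ℂ)) - diagonal (fun k => (w k : ℂ))) *ᵥ lsResidual m n f Ψ w) := by
  set a := (weightedGram Ψ w)⁻¹ *ᵥ ((Ψᴴ * diagonal (fun k => (w k : ℂ))) *ᵥ f)
  have hnormal : Ψᴴ *ᵥ ((diagonal (fun k => (v k : ℂ)) - diagonal (fun k => (w k : ℂ))) *ᵥ
      lsResidual m n f Ψ w) = (Ψᴴ * diagonal (fun k => (v k : ℂ))) *ᵥ f - weightedGram Ψ v *ᵥ a := by
    rw [mulVec_mulVec, Matrix.mul_sub, sub_mulVec, conjTranspose_mul_diagonal_mulVec_lsResidual f hw,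
      sub_zero, lsResidual_eq, mulVec_sub, mulVec_mulVec a]
    rfl
  have hcancel : (weightedGram Ψ v)⁻¹ *ᵥ (weightedGram Ψ v *ᵥ a) = a := by
    rw [mulVec_mulVec, nonsing_inv_mul _ ((isUnit_iff_isUnit_det _).mp hv), one_mulVec]
  rw [← mulVec_mulVec, ← mulVec_mulVec, hnormal, mulVec_sub, hcancel, lsResidual_eq,
    lsResidual_eq]
  simp only [mulVec_sub]
  abel

theorem lsResidual_update_apply {w : Fin m → ℝ} {j : Fin m} {s : ℝ}
    (hs : IsUnit (weightedGram Ψ (Function.update w j s))) (hw : IsUnit (weightedGram Ψ w))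
    (i : Fin m) :
    lsResidual m n f Ψ (Function.update w j s) i = lsResidual m n f Ψ w i -
      (s - w j) • ((Ψ * (weightedGram Ψ (Function.update w j s))⁻¹ * Ψᴴ) i j *
        lsResidual m n f Ψ w j) := by
  rw [lsResidual_eq_sub f hs hw, diagonal_update_sub_diagonal_mulVec, Pi.sub_apply, mulVec_single]
  simp only [Pi.smul_apply, col_apply, MulOpposite.smul_eq_mul_unop, MulOpposite.unop_op]
  rw [Complex.real_smul, Complex.real_smul]
  ring

theorem hasDerivAt_lsResidual_update (hΨ : Function.Injective Ψ.mulVec) {w : Fin m → ℝ}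
    (hw : ∀ k, 0 < w k) (i j : Fin m) :
    HasDerivAt (fun s : ℝ => lsResidual m n f Ψ (Function.update w j s) i)
      (-((Ψ * (weightedGram Ψ w)⁻¹ * Ψᴴ) i j * lsResidual m n f Ψ w j)) (w j) := by
  set K := fun s : ℝ => (Ψ * (weightedGram Ψ (Function.update w j s))⁻¹ * Ψᴴ) i j *
    lsResidual m n f Ψ w j
  have hK : ContinuousAt K (w j) := by
    have hinv := (continuousAt_weightedGram_inv (isUnit_weightedGram hΨ hw)).comp_of_eq
      (continuous_const.update j continuous_id).continuousAt (Function.update_eq_self j w)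
    have hentry : Continuous fun M : Matrix (Fin n) (Fin n) ℂ => (Ψ * M * Ψᴴ) i j *
        lsResidual m n f Ψ w j :=
      (((continuous_const.matrix_mul continuous_id).matrix_mul continuous_const).matrix_elem i j).mul
        continuous_const
    exact hentry.continuousAt.comp hinv
  have hupdate : (fun s => lsResidual m n f Ψ (Function.update w j s) i) =ᶠ[𝓝 (w j)]
      fun s => lsResidual m n f Ψ w i - (s - w j) • K s := by
    filter_upwards [eventually_gt_nhds (hw j)] with s hs
    refine lsResidual_update_apply f (isUnit_weightedGram hΨ ?_) (isUnit_weightedGram hΨ hw) i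
    exact Function.forall_update_iff w (p := fun _ t => 0 < t) |>.mpr ⟨hs, fun k _ => hw k⟩
  simpa [K] using ((hasDerivAt_sub_smul_of_continuousAt hK).const_sub _).congr_of_eventuallyEq
    hupdate

end Residual

theorem hessian_of_dual_general
    (m n : ℕ)
    (f : Fin m → ℂ) (Ψ : Matrix (Fin m) (Fin n) ℂ) (hrank : Ψ.rank = n)
    (w : Fin m → ℝ) (hw : ∀ j, 0 < w j) :
    ∀ i j : Fin m,
      HasDerivAt
        (fun s : ℝ => ‖lsResidual m n f Ψ (Function.update w j s) i‖ ^ 2)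
        (-2 * ((starRingEnd ℂ) (lsResidual m n f Ψ w i) *
          (Ψ * (Ψ.conjTranspose * Matrix.diagonal (fun k => (w k : ℂ)) * Ψ)⁻¹ *
            Ψ.conjTranspose) i j *
          lsResidual m n f Ψ w j).re)
        (w j) := by
  intro i j
  have hΨ : Function.Injective Ψ.mulVec :=
    mulVec_injective_of_rank_eq_card (by rwa [Fintype.card_fin])
  convert (hasDerivAt_lsResidual_update f hΨ hw i j).norm_sq using 1
  have hG : weightedGram Ψ w = Ψᴴ * diagonal (fun k => (w k : ℂ)) * Ψ := rfl
  rw [Function.update_eq_self, Complex.inner, hG]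
  simp only [neg_mul, Complex.neg_re]
  ring_nf

/-- Hessian of the `L_2` dual function (Proposition 4.1): for `w > 0`, the partial
derivative of `w ↦ |r_i(w)|²` with respect to `w_j` exists and equals
`−2 Re( conj(r_i(w)) · (Ψ (Ψᴴ W Ψ)⁻¹ Ψᴴ)_{i,j} · r_j(w) )`, i.e. the Hessian of `d`
at `w` is `−2 Re( diag(r)ᴴ Ψ (Ψᴴ W Ψ)⁻¹ Ψᴴ diag(r) )`. -/
theorem hessian_of_dual
    (m n : ℕ) (hn : 0 < n) (hnm : n ≤ m)
    (f : Fin m → ℂ) (Ψ : Matrix (Fin m) (Fin n) ℂ) (hrank : Ψ.rank = n)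
    (w : Fin m → ℝ) (hw : ∀ j, 0 < w j) :
    ∀ i j : Fin m,
      HasDerivAt
        (fun s : ℝ => ‖lsResidual m n f Ψ (Function.update w j s) i‖ ^ 2)
        (-2 * ((starRingEnd ℂ) (lsResidual m n f Ψ w i) *
          (Ψ * (Ψ.conjTranspose * Matrix.diagonal (fun k => (w k : ℂ)) * Ψ)⁻¹ *
            Ψ.conjTranspose) i j *
          lsResidual m n f Ψ w j).re)
        (w j) :=
  hessian_of_dual_general m n f Ψ hrank w hw
end
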